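/- If h solves h³(h'' + h') = 1 on [t₀,∞) with h(t₀) = h₀ > 0, then h(t) = √2 · t^{1/4} + O(1) as t → +∞. -/

import Mathlib

/-!
Write `w = h⁴` and `G = h³h' - 1`. The equation gives `w' = 4(G + 1)` and
`G' + G = 3h²h'² ≥ 0`, so `eᵗG` is nondecreasing: either `G ≤ 0` throughout, or `G > 0` from
some time on. In the second case `h` is increasing and concave, so `t h' ≤ 2h` for large `t`,
and `u = tG` satisfies `u' + u/2 ≤ 6`, whence `G = O(1/t)`. In both cases `G ≤ C/t`
eventually. Since `w + 4G - 4t` is nondecreasing and `w - 4t - 8C√t` nonincreasing,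
`w = 4t + O(√t)`. Finally, with `y = √2 t^{1/4}`, `|h - y| ≤ |h⁴ - y⁴| / y²` for `y ≥ 1`,
and `y² = 2√t`.
-/

open Set Filter Real

lemma monotoneOn_Ici_of_hasDerivAt_nonneg {f f' : ℝ → ℝ} {a : ℝ}
    (hf : ∀ t ∈ Ici a, HasDerivAt f (f' t) t) (hf' : ∀ t ∈ Ioi a, 0 ≤ f' t) :
    MonotoneOn f (Ici a) :=
  monotoneOn_of_deriv_nonneg (convex_Ici a)
    (fun t ht => (hf t ht).continuousAt.continuousWithinAt)
    (fun t ht => by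
      rw [interior_Ici] at ht
      exact (hf t (Ioi_subset_Ici_self ht)).differentiableAt.differentiableWithinAt)
    (fun t ht => by
      rw [interior_Ici] at ht
      rw [(hf t (Ioi_subset_Ici_self ht)).deriv]
      exact hf' t ht)

lemma antitoneOn_Ici_of_hasDerivAt_nonpos {f f' : ℝ → ℝ} {a : ℝ}
    (hf : ∀ t ∈ Ici a, HasDerivAt f (f' t) t) (hf' : ∀ t ∈ Ioi a, f' t ≤ 0) :
    AntitoneOn f (Ici a) := by
  have := monotoneOn_Ici_of_hasDerivAt_nonneg (fun t ht => (hf t ht).neg)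
    (fun t ht => neg_nonneg.2 (hf' t ht))
  exact fun s hs t ht hst => neg_le_neg_iff.1 (this hs ht hst)

/-- Grönwall: `e^{kt} (f - c/k)` is antitone. -/
lemma le_max_of_hasDerivAt_add_mul_le {f f' : ℝ → ℝ} {a k c : ℝ} (hk : 0 < k)
    (hf : ∀ t ∈ Ici a, HasDerivAt f (f' t) t) (hle : ∀ t ∈ Ioi a, f' t + k * f t ≤ c) :
    ∀ t ∈ Ici a, f t ≤ max (f a) (c / k) := by
  have hanti : AntitoneOn (fun t => exp (k * t) * (f t - c / k)) (Ici a) := by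
    refine antitoneOn_Ici_of_hasDerivAt_nonpos
      (f' := fun t => exp (k * t) * (f' t + k * f t - c)) (fun t ht => ?_) (fun t ht => ?_)
    · refine (((hasDerivAt_id t).const_mul k).exp.mul ((hf t ht).sub_const _)).congr_deriv ?_
      simp only [id]
      field_simp
      ring
    · exact mul_nonpos_of_nonneg_of_nonpos (exp_pos _).le (by linarith [hle t ht])
  intro t ht
  by_contra! hlt
  have hgt : 0 < f t - c / k := sub_pos.2 ((le_max_right _ _).trans_lt hlt)
  have hexp : exp (k * a) ≤ exp (k * t) := exp_le_exp.2 (by nlinarith [mem_Ici.1 ht])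
  have hdecay : exp (k * t) * (f t - c / k) ≤ exp (k * a) * (f a - c / k) :=
    hanti self_mem_Ici ht ht
  have hfa : f a < f t := (le_max_left _ _).trans_lt hlt
  nlinarith [mul_le_mul_of_nonneg_right hexp hgt.le, exp_pos (k * a)]

structure IsPosSolution (h h' h'' : ℝ → ℝ) (t₀ : ℝ) : Prop where
  hasDerivAt : ∀ t ∈ Ici t₀, HasDerivAt h (h' t) t
  hasDerivAt_deriv : ∀ t ∈ Ici t₀, HasDerivAt h' (h'' t) t
  pos : ∀ t ∈ Ici t₀, 0 < h t
  ode : ∀ t ∈ Ici t₀, h t ^ 3 * (h'' t + h' t) = 1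

def defect (h h' : ℝ → ℝ) (t : ℝ) : ℝ := h t ^ 3 * h' t - 1

namespace IsPosSolution

variable {h h' h'' : ℝ → ℝ} {t₀ : ℝ}

lemma hasDerivAt_pow_four (hs : IsPosSolution h h' h'' t₀) {t : ℝ} (ht : t ∈ Ici t₀) :
    HasDerivAt (fun s => h s ^ 4) (4 * (defect h h' t + 1)) t := by
  refine ((hs.hasDerivAt t ht).pow 4).congr_deriv ?_
  simp only [defect]
  ring

lemma hasDerivAt_defect (hs : IsPosSolution h h' h'' t₀) {t : ℝ} (ht : t ∈ Ici t₀) :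
    HasDerivAt (defect h h') (3 * h t ^ 2 * h' t ^ 2 - defect h h' t) t := by
  refine (((hs.hasDerivAt t ht).pow 3).mul (hs.hasDerivAt_deriv t ht)
    |>.sub_const 1).congr_deriv ?_
  simp only [defect, Pi.pow_apply]
  linear_combination hs.ode t ht

lemma monotoneOn_exp_mul_defect (hs : IsPosSolution h h' h'' t₀) :
    MonotoneOn (fun t => exp t * defect h h' t) (Ici t₀) := by
  refine monotoneOn_Ici_of_hasDerivAt_nonneg
    (fun t ht => (hasDerivAt_exp t).mul (hs.hasDerivAt_defect ht)) (fun t ht => ?_)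
  have := hs.pos t (Ioi_subset_Ici_self ht)
  ring_nf
  positivity

lemma defect_pos_of_le (hs : IsPosSolution h h' h'' t₀) {t₁ t : ℝ} (ht₁ : t₁ ∈ Ici t₀)
    (hG : 0 < defect h h' t₁) (ht : t₁ ≤ t) : 0 < defect h h' t := by
  have := hs.monotoneOn_exp_mul_defect ht₁ (mem_Ici.2 (le_trans ht₁ ht)) ht
  simp only at this
  exact pos_of_mul_pos_right ((mul_pos (exp_pos t₁) hG).trans_le this) (exp_pos t).le

lemma monotoneOn_pow_four_add_defect (hs : IsPosSolution h h' h'' t₀) :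
    MonotoneOn (fun t => h t ^ 4 + 4 * defect h h' t - 4 * t) (Ici t₀) := by
  refine monotoneOn_Ici_of_hasDerivAt_nonneg (fun t ht =>
    ((hs.hasDerivAt_pow_four ht).add ((hs.hasDerivAt_defect ht).const_mul 4)).sub
      ((hasDerivAt_id t).const_mul 4)) (fun t ht => ?_)
  ring_nf
  positivity

lemma deriv_pos_of_defect_pos (hs : IsPosSolution h h' h'' t₀) {t : ℝ} (ht : t ∈ Ici t₀)
    (hG : 0 < defect h h' t) : 0 < h' t := by
  have := pow_pos (hs.pos t ht) 3
  simp only [defect] at hG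
  nlinarith

lemma deriv_deriv_neg_of_defect_pos (hs : IsPosSolution h h' h'' t₀) {t : ℝ}
    (ht : t ∈ Ici t₀) (hG : 0 < defect h h' t) : h'' t < 0 := by
  have := pow_pos (hs.pos t ht) 3
  have := hs.ode t ht
  simp only [defect] at hG
  nlinarith

lemma mul_deriv_le_two_mul (hs : IsPosSolution h h' h'' t₀) {t₁ : ℝ}
    (ht₁ : t₁ ∈ Ici t₀) (hG : 0 < defect h h' t₁) {t : ℝ} (ht : t₁ ≤ t) (ht₂ : 2 * t₁ ≤ t) :
    t * h' t ≤ 2 * h t := by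
  have hsub : Ici t₁ ⊆ Ici t₀ := Ici_subset_Ici.2 ht₁
  have hchord : MonotoneOn (fun s => h s - h' s * (s - t₁)) (Ici t₁) := by
    refine monotoneOn_Ici_of_hasDerivAt_nonneg (fun s hs' =>
      (hs.hasDerivAt s (hsub hs')).sub ((hs.hasDerivAt_deriv s (hsub hs')).mul
        ((hasDerivAt_id s).sub_const t₁))) (fun s hs' => ?_)
    have hs₁ : t₁ < s := hs'
    have := hs.deriv_deriv_neg_of_defect_pos (hsub (Ioi_subset_Ici_self hs'))
      (hs.defect_pos_of_le ht₁ hG hs₁.le)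
    nlinarith
  have hle := hchord self_mem_Ici ht ht
  have hpos₁ := hs.pos t₁ ht₁
  have hd := hs.deriv_pos_of_defect_pos (hsub ht) (hs.defect_pos_of_le ht₁ hG ht)
  simp only [sub_self, mul_zero, sub_zero] at hle
  nlinarith

lemma exists_defect_le_div_of_pos (hs : IsPosSolution h h' h'' t₀) {t₁ : ℝ}
    (ht₁ : t₁ ∈ Ici t₀) (hG : 0 < defect h h' t₁) :
    ∃ T C, t₁ ≤ T ∧ 1 ≤ T ∧ 0 ≤ C ∧ ∀ t ∈ Ici T, defect h h' t ≤ C / t := by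
  set T := max (2 * t₁) 14
  have hT₁ : t₁ ≤ T := by
    rcases le_total 0 t₁ with h0 | h0
    · exact le_max_of_le_left (by linarith)
    · exact le_max_of_le_right (by linarith)
  have hT : 14 ≤ T := le_max_right _ _
  have hsub : Ici T ⊆ Ici t₀ := Ici_subset_Ici.2 (le_trans ht₁ hT₁)
  have hineq : ∀ t ∈ Ioi T,
      (1 * defect h h' t + t * (3 * h t ^ 2 * h' t ^ 2 - defect h h' t)) +
        1 / 2 * (t * defect h h' t) ≤ 6 := by
    intro t ht
    have htT : T ≤ t := (mem_Ici.1 (Ioi_subset_Ici_self ht))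
    have hGt := hs.defect_pos_of_le ht₁ hG (hT₁.trans htT)
    have hslope := hs.mul_deriv_le_two_mul ht₁ hG (hT₁.trans htT) ((le_max_left _ _).trans htT)
    have hd := hs.deriv_pos_of_defect_pos (hsub htT) hGt
    have hpos := hs.pos t (hsub htT)
    have hsq : t * (3 * h t ^ 2 * h' t ^ 2) ≤ 6 * (defect h h' t + 1) := by
      simp only [defect]
      nlinarith [mul_le_mul_of_nonneg_left hslope (by positivity : 0 ≤ 3 * h t ^ 2 * h' t)]
    nlinarith
  have hbound := le_max_of_hasDerivAt_add_mul_le (f := fun t => t * defect h h' t)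
    (by norm_num) (fun t ht => (hasDerivAt_id' t).mul (hs.hasDerivAt_defect (hsub ht))) hineq
  refine ⟨T, max (T * defect h h' T) (6 / (1 / 2)), hT₁, by linarith,
    le_max_of_le_right (by norm_num), fun t ht => ?_⟩
  have ht0 : 0 < t := by linarith [mem_Ici.1 ht]
  rw [le_div_iff₀ ht0, mul_comm]
  exact hbound t ht

lemma exists_defect_le_div (hs : IsPosSolution h h' h'' t₀) :
    ∃ T C, t₀ ≤ T ∧ 1 ≤ T ∧ 0 ≤ C ∧ ∀ t ∈ Ici T, defect h h' t ≤ C / t := by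
  by_cases hcase : ∃ t₁ ∈ Ici t₀, 0 < defect h h' t₁
  · obtain ⟨t₁, ht₁, hG⟩ := hcase
    obtain ⟨T, C, hT₁, hT, hC, hbound⟩ := hs.exists_defect_le_div_of_pos ht₁ hG
    exact ⟨T, C, le_trans ht₁ hT₁, hT, hC, hbound⟩
  · push Not at hcase
    refine ⟨max t₀ 1, 0, le_max_left _ _, le_max_right _ _, le_rfl, fun t ht => ?_⟩
    rw [zero_div]
    exact hcase t (Ici_subset_Ici.2 (le_max_left _ _) ht)

lemma exists_abs_pow_four_sub_le (hs : IsPosSolution h h' h'' t₀) :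
    ∃ T B, 1 ≤ T ∧ t₀ ≤ T ∧ ∀ t ∈ Ici T, |h t ^ 4 - 4 * t| ≤ B * √t := by
  obtain ⟨T, C, hT₀, hT, hC, hG⟩ := hs.exists_defect_le_div
  have hsub : Ici T ⊆ Ici t₀ := Ici_subset_Ici.2 hT₀
  have hlower := hs.monotoneOn_pow_four_add_defect
  have hupper : AntitoneOn (fun t => h t ^ 4 - 4 * t - 8 * C * √t) (Ici T) := by
    refine antitoneOn_Ici_of_hasDerivAt_nonpos (fun t ht =>
      ((hs.hasDerivAt_pow_four (hsub ht)).sub ((hasDerivAt_id t).const_mul 4)).sub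
        ((hasDerivAt_sqrt (by linarith [mem_Ici.1 ht])).const_mul (8 * C))) (fun t ht => ?_)
    have ht1 : 1 ≤ t := by linarith [mem_Ioi.1 ht]
    have hsqrt : 1 ≤ √t := one_le_sqrt.2 ht1
    have hsqrt_le : √t ≤ t := sqrt_le_self_iff.2 (Or.inr ht1)
    have hGt := hG t (Ioi_subset_Ici_self ht)
    have : C / t ≤ C / √t := div_le_div_of_nonneg_left hC (by linarith) hsqrt_le
    have : 8 * C * (1 / (2 * √t)) = 4 * (C / √t) := by field_simp; ring
    linarith
  set A := h T ^ 4 + 4 * defect h h' T - 4 * T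
  set D := h T ^ 4 - 4 * T - 8 * C * √T
  refine ⟨T, (|A| + 4 * C) + (|D| + 8 * C), hT, hT₀, fun t ht => ?_⟩
  have ht1 : 1 ≤ t := le_trans hT ht
  have hsqrt : 1 ≤ √t := one_le_sqrt.2 ht1
  have hGt : defect h h' t ≤ C := (hG t ht).trans (div_le_self hC ht1)
  have hlo : -((|A| + 4 * C) * √t) ≤ h t ^ 4 - 4 * t := by
    have : A ≤ h t ^ 4 + 4 * defect h h' t - 4 * t :=
      hlower (hsub self_mem_Ici) (hsub ht) (mem_Ici.1 ht)
    nlinarith [neg_abs_le A, mul_nonneg (by positivity : 0 ≤ |A| + 4 * C) (sub_nonneg.2 hsqrt)]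
  have hup : h t ^ 4 - 4 * t ≤ (|D| + 8 * C) * √t := by
    have : h t ^ 4 - 4 * t - 8 * C * √t ≤ D := hupper self_mem_Ici ht (mem_Ici.1 ht)
    nlinarith [le_abs_self D, mul_nonneg (abs_nonneg D) (sub_nonneg.2 hsqrt)]
  rw [abs_le]
  constructor <;> nlinarith [abs_nonneg A, abs_nonneg D]

end IsPosSolution

lemma abs_sub_le_of_abs_pow_four_sub_le {x y B : ℝ} (hx : 0 ≤ x) (hy : 1 ≤ y)
    (hxy : |x ^ 4 - y ^ 4| ≤ B * y ^ 2) : |x - y| ≤ B := by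
  have hsum : y ^ 2 ≤ x ^ 3 + x ^ 2 * y + x * y ^ 2 + y ^ 3 := by
    nlinarith [pow_le_pow_right₀ hy (by norm_num : 2 ≤ 3), pow_nonneg hx 3,
      mul_nonneg (pow_nonneg hx 2) (by linarith : 0 ≤ y), mul_nonneg hx (sq_nonneg y)]
  have hfactor : |x ^ 4 - y ^ 4| = |x - y| * (x ^ 3 + x ^ 2 * y + x * y ^ 2 + y ^ 3) := by
    rw [← abs_of_nonneg ((sq_nonneg y).trans hsum), ← abs_mul]
    ring_nf
  refine le_of_mul_le_mul_right ?_ (by positivity : 0 < y ^ 2)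
  calc |x - y| * y ^ 2 ≤ |x - y| * (x ^ 3 + x ^ 2 * y + x * y ^ 2 + y ^ 3) :=
        mul_le_mul_of_nonneg_left hsum (abs_nonneg _)
    _ = |x ^ 4 - y ^ 4| := hfactor.symm
    _ ≤ B * y ^ 2 := hxy

theorem stmt_4_general (t₀ : ℝ) (h : ℝ → ℝ)
    (hpos : ∀ t ∈ Ici t₀, 0 < h t)
    (hdiff : ∀ t ∈ Ici t₀, DifferentiableAt ℝ h t)
    (hdiff' : ∀ t ∈ Ici t₀, DifferentiableAt ℝ (deriv h) t)
    (hode : ∀ t ∈ Ici t₀, (h t) ^ 3 * (deriv (deriv h) t + deriv h t) = 1) :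
    (fun t : ℝ => h t - Real.sqrt 2 * t ^ ((1 : ℝ) / 4)) =O[atTop]
      (fun _ : ℝ => (1 : ℝ)) := by
  have hs : IsPosSolution h (deriv h) (deriv (deriv h)) t₀ :=
    ⟨fun t ht => (hdiff t ht).hasDerivAt, fun t ht => (hdiff' t ht).hasDerivAt, hpos, hode⟩
  obtain ⟨T, B, hT, hT₀, hbound⟩ := hs.exists_abs_pow_four_sub_le
  refine Asymptotics.isBigO_iff.2 ⟨B / 2, ?_⟩
  filter_upwards [eventually_ge_atTop T] with t ht
  have ht0 : 0 < t := by linarith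
  set s := t ^ ((1 : ℝ) / 4)
  have hs4 : s ^ 4 = t := by
    rw [← Real.rpow_natCast, ← Real.rpow_mul ht0.le]
    norm_num
  have hs1 : 1 ≤ s := Real.one_le_rpow (by linarith) (by norm_num)
  have hsqrt : √t = s ^ 2 := by
    rw [← hs4, show s ^ 4 = (s ^ 2) ^ 2 by ring, sqrt_sq (by positivity)]
  have hy : 1 ≤ √2 * s := one_le_mul_of_one_le_of_one_le (one_le_sqrt.2 (by norm_num)) hs1
  have hsq2 : √2 ^ 2 = 2 := sq_sqrt (by norm_num)
  have hbound' : |h t ^ 4 - (√2 * s) ^ 4| ≤ B / 2 * (√2 * s) ^ 2 := by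
    have hy4 : (√2 * s) ^ 4 = 4 * t := by
      rw [← hs4, mul_pow, show √2 ^ 4 = (√2 ^ 2) ^ 2 by ring, hsq2]
      norm_num
    rw [hy4, mul_pow, hsq2, show B / 2 * (2 * s ^ 2) = B * √t by rw [hsqrt]; ring]
    exact hbound t ht
  simpa using abs_sub_le_of_abs_pow_four_sub_le (hpos t (le_trans hT₀ ht)).le hy hbound'

/-- If `h` solves `h³(h'' + h') = 1` on `[t₀,∞)` with `h t₀ = h₀ > 0`, then
`h(t) = √2 · t^{1/4} + O(1)` as `t → +∞`. -/
theorem stmt_4 (t₀ h₀ : ℝ) (h : ℝ → ℝ) (hh₀ : 0 < h₀) (hinit : h t₀ = h₀)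
    (hpos : ∀ t ∈ Ici t₀, 0 < h t)
    (hdiff : ∀ t ∈ Ici t₀, DifferentiableAt ℝ h t)
    (hdiff' : ∀ t ∈ Ici t₀, DifferentiableAt ℝ (deriv h) t)
    (hode : ∀ t ∈ Ici t₀, (h t) ^ 3 * (deriv (deriv h) t + deriv h t) = 1) :
    (fun t : ℝ => h t - Real.sqrt 2 * t ^ ((1 : ℝ) / 4)) =O[atTop]
      (fun _ : ℝ => (1 : ℝ)) :=
  stmt_4_general t₀ h hpos hdiff hdiff' hode
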